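/- arXiv:1808.05339 — 2 statements merged into one kernel-verified Lean document; each statement's English description precedes it below -/
import Mathlib

section
/- Among all nonnegative measurable tilting functions $h$ with $0 < \int_{\mathbb{X}} h f \, d\mu < \infty$, the function $\tilde{h}(x) \propto \left(\sum_{j=1}^J a_j^2 / e_j(x)\right)^{-1}$ minimizes the asymptotic variance functional $Q(h) = \frac{\int_{\mathbb{X}} \left(\sum_{j=1}^J a_j^2 v / e_j(x)\right) h(x)^2 f(x) \mu(dx)}{\left(\int_{\mathbb{X}} h(x) f(x) \mu(dx)\right)^2}$, and the minimum value is $v / \int_{\mathbb{X}} \tilde{h}(x) f(x) \mu(dx)$ when $\tilde h(x) = (\sum_j a_j^2/e_j(x))^{-1}$. -/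
open MeasureTheory

/-- Under homoscedasticity, the tilting function `h̃ x = (∑ j, a j² / e j x)⁻¹` minimizes
the asymptotic variance functional
`Q(h) = ∫ (∑ j, a j² v / e j x) h² f dμ / (∫ h f dμ)²`
over all nonnegative tilting functions with positive finite `∫ h f dμ`, and the minimum
value is `v / ∫ h̃ f dμ`. -/
theorem optimal_tilting_function {X : Type*} [MeasurableSpace X] (μ : Measure X)
    {J : ℕ} (e : Fin J → X → ℝ) (f : X → ℝ) (v : ℝ) (a : Fin J → ℝ)
    (hv : 0 < v) (ha : ∃ j, a j ≠ 0)
    (he_pos : ∀ j x, 0 < e j x ∧ e j x < 1) (he_sum : ∀ x, ∑ j, e j x = 1)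
    (hf_nonneg : ∀ x, 0 ≤ f x) (hf_prob : ∫ x, f x ∂μ = 1)
    (htilde_int : Integrable (fun x => (∑ j, (a j) ^ 2 / e j x)⁻¹ * f x) μ)
    (htilde_pos : 0 < ∫ x, (∑ j, (a j) ^ 2 / e j x)⁻¹ * f x ∂μ) :
    (∀ h : X → ℝ, Measurable h → (∀ x, 0 ≤ h x) →
        Integrable (fun x => h x * f x) μ →
        0 < ∫ x, h x * f x ∂μ →
        Integrable (fun x => (∑ j, (a j) ^ 2 * v / e j x) * (h x) ^ 2 * f x) μ →
        v / ∫ x, (∑ j, (a j) ^ 2 / e j x)⁻¹ * f x ∂μ ≤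
          (∫ x, (∑ j, (a j) ^ 2 * v / e j x) * (h x) ^ 2 * f x ∂μ) /
            (∫ x, h x * f x ∂μ) ^ 2) ∧
      (∫ x, (∑ j, (a j) ^ 2 * v / e j x) * ((∑ j, (a j) ^ 2 / e j x)⁻¹) ^ 2 * f x ∂μ) /
          (∫ x, (∑ j, (a j) ^ 2 / e j x)⁻¹ * f x ∂μ) ^ 2 =
        v / ∫ x, (∑ j, (a j) ^ 2 / e j x)⁻¹ * f x ∂μ := by
  obtain ⟨j₀, hj₀⟩ := ha
  set S : X → ℝ := fun x => ∑ j, (a j) ^ 2 / e j x with hSdef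
  have hS : ∀ x, 0 < S x := by
    intro x
    apply Finset.sum_pos'
    · intro j _
      exact div_nonneg (sq_nonneg _) (he_pos j x).1.le
    · exact ⟨j₀, Finset.mem_univ _,
        div_pos (lt_of_le_of_ne (sq_nonneg _) (Ne.symm (pow_ne_zero 2 hj₀))) (he_pos j₀ x).1⟩
  have hsum : ∀ x, (∑ j, (a j) ^ 2 * v / e j x) = v * S x := by
    intro x
    rw [hSdef, Finset.mul_sum]
    exact Finset.sum_congr rfl fun j _ => by ring
  set I := ∫ x, (S x)⁻¹ * f x ∂μ with hIdef
  have hIpos : 0 < I := htilde_pos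
  constructor
  · intro h hmeas hpos hint hApos H2
    set A := ∫ x, h x * f x ∂μ with hAdef
    have hBint : Integrable (fun x => S x * h x ^ 2 * f x) μ := by
      have heq : (fun x => S x * h x ^ 2 * f x)
          = fun x => v⁻¹ * ((∑ j, (a j) ^ 2 * v / e j x) * h x ^ 2 * f x) := by
        funext x
        rw [hsum]
        field_simp
      rw [heq]
      exact H2.const_mul _
    set B := ∫ x, S x * h x ^ 2 * f x ∂μ with hBdef
    have hBnn : 0 ≤ B := integral_nonneg fun x => by
      have h1 := hS x
      have h2 := hpos x
      have h3 := hf_nonneg x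
      positivity
    have key : ∀ t : ℝ, 0 < t → A ≤ t / 2 * B + 1 / (2 * t) * I := by
      intro t ht
      have hineq : ∀ x, h x * f x
          ≤ t / 2 * (S x * h x ^ 2 * f x) + 1 / (2 * t) * ((S x)⁻¹ * f x) := by
        intro x
        have hSx := hS x
        have hfx := hf_nonneg x
        have hhx := hpos x
        have h1 : h x ≤ t / 2 * (S x * h x ^ 2) + 1 / (2 * t) * (S x)⁻¹ := by
          have h2 : 2 * t * S x * h x ≤ t ^ 2 * (S x) ^ 2 * h x ^ 2 + 1 := by
            nlinarith [sq_nonneg (t * S x * h x - 1)]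
          calc h x = (2 * t * S x * h x) / (2 * t * S x) := by field_simp
            _ ≤ (t ^ 2 * (S x) ^ 2 * h x ^ 2 + 1) / (2 * t * S x) := by
                apply div_le_div_of_nonneg_right h2 (by positivity) |>.trans_eq rfl
            _ = t / 2 * (S x * h x ^ 2) + 1 / (2 * t) * (S x)⁻¹ := by
                field_simp
        nlinarith [mul_le_mul_of_nonneg_right h1 hfx]
      calc A ≤ ∫ x, (t / 2 * (S x * h x ^ 2 * f x) + 1 / (2 * t) * ((S x)⁻¹ * f x)) ∂μ := by
              exact integral_mono hint ((hBint.const_mul _).add (htilde_int.const_mul _)) hineq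
        _ = t / 2 * B + 1 / (2 * t) * I := by
              rw [integral_add (hBint.const_mul _) (htilde_int.const_mul _),
                integral_const_mul, integral_const_mul]
    have hBpos : 0 < B := by
      rcases lt_or_eq_of_le hBnn with hB | hB
      · exact hB
      · exfalso
        have ht : 0 < I / A := div_pos hIpos hApos
        have h5 := key (I / A) ht
        have h6 : (I / A) / 2 * B + 1 / (2 * (I / A)) * I = A / 2 := by
          rw [← hB]
          field_simp [hIpos.ne', hApos.ne']
          ring
        linarith
    have hCS : A ^ 2 ≤ B * I := by
      set t := Real.sqrt (I / B) with htdef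
      have ht : 0 < t := Real.sqrt_pos.mpr (div_pos hIpos hBpos)
      have ht2 : t ^ 2 * B = I := by
        rw [htdef, Real.sq_sqrt (le_of_lt (div_pos hIpos hBpos))]
        field_simp
      have h5 := key t ht
      have h6 : 1 / (2 * t) * I = t * B / 2 := by
        rw [← ht2]
        field_simp
      have h4 : A ≤ t * B := by linarith
      have h7 : A ^ 2 ≤ (t * B) ^ 2 := by nlinarith
      nlinarith [ht2]
    have hint_eq : ∫ x, (∑ j, (a j) ^ 2 * v / e j x) * h x ^ 2 * f x ∂μ = v * B := by
      rw [hBdef, ← integral_const_mul]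
      congr 1
      funext x
      rw [hsum]
      ring
    rw [hint_eq, div_le_div_iff₀ hIpos (by positivity)]
    nlinarith [hCS]
  · have heq : (fun x => (∑ j, (a j) ^ 2 * v / e j x) * ((S x)⁻¹) ^ 2 * f x)
        = fun x => v * ((S x)⁻¹ * f x) := by
      funext x
      rw [hsum]
      have := (hS x).ne'
      field_simp
    rw [show (∫ x, (∑ j, (a j) ^ 2 * v / e j x) * ((S x)⁻¹) ^ 2 * f x ∂μ)
        = v * I by rw [heq, integral_const_mul]]
    field_simp
end

section
/- (Exact balance with binary overlap weights) If the propensity score $e(x) = (1 + \exp(-\alpha - x^T\beta))^{-1}$ is estimated by maximum likelihood logistic regression on data $(x_i, z_i)$, $z_i \in \{0,1\}$, then the overlap-weighted means of every covariate entering the model are exactly equal between the two groups: $\frac{\sum_i z_i x_{ik}(1 - \hat e(x_i))}{\sum_i z_i (1 - \hat e(x_i))} = \frac{\sum_i (1 - z_i) x_{ik}\, \hat e(x_i)}{\sum_i (1 - z_i)\, \hat e(x_i)}$ for each covariate coordinate $k$. -/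
open Finset

/-- Exact balance with binary overlap weights: if the fitted logistic propensity scores
satisfy the maximum-likelihood score equations (intercept and each covariate), then the
overlap-weighted mean of every covariate is exactly equal between the two groups. -/
theorem overlap_exact_balance {n p : ℕ} (x : Fin n → Fin p → ℝ) (z : Fin n → ℝ)
    (hz : ∀ i, z i = 0 ∨ z i = 1)
    (α : ℝ) (β : Fin p → ℝ) (ehat : Fin n → ℝ)
    (hlogit : ∀ i, ehat i = 1 / (1 + Real.exp (-(α + ∑ k, β k * x i k))))
    (hscore0 : ∑ i, (z i - ehat i) = 0)
    (hscore : ∀ k, ∑ i, x i k * (z i - ehat i) = 0)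
    (hden1 : ∑ i, z i * (1 - ehat i) ≠ 0)
    (hden0 : ∑ i, (1 - z i) * ehat i ≠ 0) :
    ∀ k, (∑ i, z i * x i k * (1 - ehat i)) / (∑ i, z i * (1 - ehat i)) =
        (∑ i, (1 - z i) * x i k * ehat i) / (∑ i, (1 - z i) * ehat i) := by
  intro k
  have hden : ∑ i, z i * (1 - ehat i) = ∑ i, (1 - z i) * ehat i := by
    have := hscore0
    have h : ∑ i, (z i * (1 - ehat i) - (1 - z i) * ehat i) = 0 := by
      calc ∑ i, (z i * (1 - ehat i) - (1 - z i) * ehat i)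
          = ∑ i, (z i - ehat i) := by apply Finset.sum_congr rfl; intro i _; ring
        _ = 0 := hscore0
    have := Finset.sum_sub_distrib (f := fun i => z i * (1 - ehat i))
      (g := fun i => (1 - z i) * ehat i) (s := Finset.univ) ▸ h
    linarith [this]
  have hnum : ∑ i, z i * x i k * (1 - ehat i) = ∑ i, (1 - z i) * x i k * ehat i := by
    have h : ∑ i, (z i * x i k * (1 - ehat i) - (1 - z i) * x i k * ehat i) = 0 := by
      calc ∑ i, (z i * x i k * (1 - ehat i) - (1 - z i) * x i k * ehat i)
          = ∑ i, x i k * (z i - ehat i) := by apply Finset.sum_congr rfl; intro i _; ring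
        _ = 0 := hscore k
    have := Finset.sum_sub_distrib (f := fun i => z i * x i k * (1 - ehat i))
      (g := fun i => (1 - z i) * x i k * ehat i) (s := Finset.univ) ▸ h
    linarith [this]
  rw [hnum, hden]
end
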